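/- (Theorem 2.) Let B and S be disjoint nonempty finite index sets of buying and selling prosumers, with parameters a_{i,b} > 0, b_{i,b} ∈ ℝ, P̲_{i,b} < 0 for buyers and a_{i,s} > 0, b_{i,s} ∈ ℝ, P̄_{i,s} > 0 for sellers, and let λ̲ < λ̄. Let k > 3, 0 < k_s < 2, 0 < k_b < 2 satisfy 2/(k_b(k−2)) < (−Σ_{i∈B} P̲_{i,b})/(Σ_{i∈S} P̄_{i,s}) < k_s(k−2)/2. Suppose the prosumers choose their parameters so that for every seller i ∈ S: λ̲ ≤ b_{i,s} < λ̲ + (λ̄−λ̲)/k and (λ̄−λ̲)/(2 P̄_{i,s}) < a_{i,s} ≤ (λ̄−λ̲)/(k_s P̄_{i,s}); and for every buyer i ∈ B: λ̲ + (k−1)(λ̄−λ̲)/k < b_{i,b} ≤ λ̄ and (λ̄−λ̲)/(−2 P̲_{i,b}) < a_{i,b} ≤ (λ̄−λ̲)/(−k_b P̲_{i,b}). Then strict feasibility holds: P̲_{i,b} < P*_{i,b} < 0 for every i ∈ B and 0 < P*_{i,s} < P̄_{i,s} for every i ∈ S. -/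

import Mathlib

/-!
The clearing price is the mean of all bids `b_j` weighted by `1 / a_j`, so `c < λ*` exactly when
`∑ (b_j - c) / a_j > 0`. The selection rules keep every seller bid within `t = (λ̄ - λ̲) / k`
above `λ̲` and every buyer bid within `t` below `λ̄`, so the two sides are at least `(k - 2) t`
apart, and they pin each weight `1 / a_j` between `κ |P_j| / (λ̄ - λ̲)` and `2 |P_j| / (λ̄ - λ̲)`.
Seen from a seller's bid, the buyers pull the sum up by at least `(k - 2) k_b t ∑ |P̲| / (λ̄ - λ̲)`
and the other sellers pull it down by less than `2 t ∑ P̄ / (λ̄ - λ̲)`; the ratio condition makes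
the buyers win, and symmetrically for a buyer's bid. Hence `b_s < λ* < b_b` for all sellers and
buyers, which gives the signs of the trading powers, and `|λ* - b_i| ≤ λ̄ - λ̲ < 2 a_i |P_i|`
gives the capacity bounds.
-/

open Finset

section ClearingPrice

variable {ι : Type*} (B S : Finset ι) (ab bb as bs : ι → ℝ)

noncomputable def clearingPrice : ℝ :=
  (∑ i ∈ B, bb i / ab i + ∑ i ∈ S, bs i / as i) / (∑ i ∈ B, 1 / ab i + ∑ i ∈ S, 1 / as i)

variable {B S ab bb as bs}

theorem lt_clearingPrice_iff (hD : 0 < ∑ i ∈ B, 1 / ab i + ∑ i ∈ S, 1 / as i) (c : ℝ) :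
    c < clearingPrice B S ab bb as bs ↔
      0 < ∑ j ∈ B, (bb j - c) / ab j + ∑ j ∈ S, (bs j - c) / as j := by
  rw [clearingPrice, lt_div_iff₀ hD, ← sub_pos]
  simp only [sub_div, sum_sub_distrib, mul_add, mul_sum, mul_one_div]
  ring_nf

theorem clearingPrice_lt_iff (hD : 0 < ∑ i ∈ B, 1 / ab i + ∑ i ∈ S, 1 / as i) (c : ℝ) :
    clearingPrice B S ab bb as bs < c ↔
      0 < ∑ j ∈ B, (c - bb j) / ab j + ∑ j ∈ S, (c - bs j) / as j := by
  rw [clearingPrice, div_lt_iff₀ hD, ← sub_pos]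
  simp only [sub_div, sum_sub_distrib, mul_add, mul_sum, mul_one_div]
  ring_nf

end ClearingPrice

theorem sum_div_add_sum_div_pos {ι : Type*} {B S : Finset ι} {a p y a' p' y' : ι → ℝ}
    {Δ t g κ : ℝ} (hΔ : 0 < Δ) (ht : 0 < t) (hg : 0 ≤ g)
    (ha : ∀ j ∈ B, 0 < a j) (ha_le : ∀ j ∈ B, a j ≤ Δ / (κ * p j)) (hy : ∀ j ∈ B, g * t ≤ y j)
    (hp' : ∀ j ∈ S, 0 < p' j) (ha' : ∀ j ∈ S, Δ / (2 * p' j) < a' j)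
    (hy' : ∀ j ∈ S, -t ≤ y' j)
    (hratio : 2 * ∑ j ∈ S, p' j < κ * g * ∑ j ∈ B, p j) :
    0 < ∑ j ∈ B, y j / a j + ∑ j ∈ S, y' j / a' j := by
  have hB : ∀ j ∈ B, g * t * (κ * p j) / Δ ≤ y j / a j := fun j hj => by
    rw [← div_div_eq_mul_div]
    exact div_le_div₀ ((mul_nonneg hg ht.le).trans (hy j hj)) (hy j hj) (ha j hj) (ha_le j hj)
  have hS : ∀ j ∈ S, -(t * (2 * p' j) / Δ) ≤ y' j / a' j := fun j hj => by
    rw [← div_div_eq_mul_div, neg_le, ← neg_div]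
    exact div_le_div₀ ht.le (neg_le.1 (hy' j hj)) (div_pos hΔ (by linarith [hp' j hj]))
      (ha' j hj).le
  have hsum : ∑ j ∈ B, g * t * (κ * p j) / Δ + ∑ j ∈ S, -(t * (2 * p' j) / Δ) =
      t / Δ * (κ * g * ∑ j ∈ B, p j - 2 * ∑ j ∈ S, p' j) := by
    simp only [← sum_div, ← mul_sum, sum_neg_distrib]
    ring
  calc 0 < t / Δ * (κ * g * ∑ j ∈ B, p j - 2 * ∑ j ∈ S, p' j) :=
        mul_pos (div_pos ht hΔ) (sub_pos.2 hratio)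
    _ ≤ _ := hsum ▸ add_le_add (sum_le_sum hB) (sum_le_sum hS)

section Bids

variable {ι : Type*} {B S : Finset ι} {ab bb Pb as bs Ps : ι → ℝ} {lamL lamU k : ℝ}

theorem sellerBid_lt_clearingPrice {kb : ℝ} (hlamLU : lamL < lamU) (hk : 2 < k)
    (hD : 0 < ∑ i ∈ B, 1 / ab i + ∑ i ∈ S, 1 / as i)
    (hab : ∀ i ∈ B, 0 < ab i) (hPs : ∀ i ∈ S, 0 < Ps i)
    (hratio : 2 * ∑ j ∈ S, Ps j < kb * (k - 2) * ∑ j ∈ B, -Pb j)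
    (hbs : ∀ i ∈ S, lamL ≤ bs i ∧ bs i < lamL + (lamU - lamL) / k)
    (has2 : ∀ i ∈ S, (lamU - lamL) / (2 * Ps i) < as i)
    (hbb : ∀ i ∈ B, lamL + (k - 1) * (lamU - lamL) / k < bb i)
    (hab2 : ∀ i ∈ B, ab i ≤ (lamU - lamL) / (-kb * Pb i)) {i : ι} (hi : i ∈ S) :
    bs i < clearingPrice B S ab bb as bs := by
  have hgap : (k - 2) * ((lamU - lamL) / k) =
      (k - 1) * (lamU - lamL) / k - (lamU - lamL) / k := by ring
  rw [lt_clearingPrice_iff hD]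
  refine sum_div_add_sum_div_pos (p := fun j => -Pb j) (t := (lamU - lamL) / k) (g := k - 2)
    (κ := kb) (sub_pos.2 hlamLU) (div_pos (sub_pos.2 hlamLU) (by linarith)) (by linarith)
    hab ?_ ?_ hPs has2 ?_ hratio
  · simpa only [neg_mul_comm] using hab2
  · intro j hj
    linarith [hbb j hj, (hbs i hi).2]
  · intro j hj
    linarith [(hbs j hj).1, (hbs i hi).2]

theorem clearingPrice_lt_buyerBid {ks : ℝ} (hlamLU : lamL < lamU) (hk : 2 < k)
    (hD : 0 < ∑ i ∈ B, 1 / ab i + ∑ i ∈ S, 1 / as i)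
    (has : ∀ i ∈ S, 0 < as i) (hPb : ∀ i ∈ B, Pb i < 0)
    (hratio : 2 * ∑ j ∈ B, -Pb j < ks * (k - 2) * ∑ j ∈ S, Ps j)
    (hbs : ∀ i ∈ S, bs i < lamL + (lamU - lamL) / k)
    (has2 : ∀ i ∈ S, as i ≤ (lamU - lamL) / (ks * Ps i))
    (hbb : ∀ i ∈ B, lamL + (k - 1) * (lamU - lamL) / k < bb i ∧ bb i ≤ lamU)
    (hab2 : ∀ i ∈ B, (lamU - lamL) / (-2 * Pb i) < ab i) {i : ι} (hi : i ∈ B) :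
    clearingPrice B S ab bb as bs < bb i := by
  have hgap : (k - 2) * ((lamU - lamL) / k) =
      (k - 1) * (lamU - lamL) / k - (lamU - lamL) / k := by ring
  have hspread : lamU - (lamU - lamL) / k = lamL + (k - 1) * (lamU - lamL) / k := by
    field_simp
    ring
  rw [clearingPrice_lt_iff hD, add_comm]
  refine sum_div_add_sum_div_pos (p' := fun j => -Pb j) (t := (lamU - lamL) / k) (g := k - 2)
    (κ := ks) (sub_pos.2 hlamLU) (div_pos (sub_pos.2 hlamLU) (by linarith)) (by linarith)
    has has2 ?_ (fun j hj => neg_pos.2 (hPb j hj)) ?_ ?_ hratio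
  · intro j hj
    linarith [(hbb i hi).1, hbs j hj]
  · simpa only [neg_mul_comm] using hab2
  · intro j hj
    linarith [(hbb j hj).2, (hbb i hi).1]

end Bids

theorem div_two_mul_lt_of_le {x Δ a P : ℝ} (hP : 0 < P) (ha : 0 < a) (haP : Δ / (2 * P) < a)
    (hx : x ≤ Δ) : x / (2 * a) < P := by
  rw [div_lt_iff₀ (by positivity)]
  rw [div_lt_iff₀ (by positivity)] at haP
  linarith

theorem lt_div_two_mul_of_le {x Δ a P : ℝ} (hP : P < 0) (ha : 0 < a) (haP : Δ / (-2 * P) < a)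
    (hx : -Δ ≤ x) : P < x / (2 * a) := by
  rw [lt_div_iff₀ (by positivity)]
  rw [div_lt_iff₀ (by linarith)] at haP
  linarith

theorem thm2_strict_feasibility_general {ι : Type*} (B S : Finset ι)
    (hB : B.Nonempty) (hS : S.Nonempty)
    (ab bb Pb as bs Ps : ι → ℝ)
    (hab : ∀ i ∈ B, 0 < ab i) (hPb : ∀ i ∈ B, Pb i < 0)
    (has : ∀ i ∈ S, 0 < as i) (hPs : ∀ i ∈ S, 0 < Ps i)
    (lamL lamU : ℝ) (hlamLU : lamL < lamU)
    (lam : ℝ)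
    (hlam : lam = (∑ i ∈ B, bb i / ab i + ∑ i ∈ S, bs i / as i) /
                  (∑ i ∈ B, 1 / ab i + ∑ i ∈ S, 1 / as i))
    (k ks kb : ℝ) (hk : k > 3) (hkb : 0 < kb ∧ kb < 2)
    (hratio1 : 2 / (kb * (k - 2)) < (-∑ i ∈ B, Pb i) / (∑ i ∈ S, Ps i))
    (hratio2 : (-∑ i ∈ B, Pb i) / (∑ i ∈ S, Ps i) < ks * (k - 2) / 2)
    (hbs : ∀ i ∈ S, lamL ≤ bs i ∧ bs i < lamL + (lamU - lamL) / k)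
    (has2 : ∀ i ∈ S, (lamU - lamL) / (2 * Ps i) < as i ∧ as i ≤ (lamU - lamL) / (ks * Ps i))
    (hbb : ∀ i ∈ B, lamL + (k - 1) * (lamU - lamL) / k < bb i ∧ bb i ≤ lamU)
    (hab2 : ∀ i ∈ B, (lamU - lamL) / (-2 * Pb i) < ab i ∧ ab i ≤ (lamU - lamL) / (-kb * Pb i)) :
    (∀ i ∈ B, Pb i < (lam - bb i) / (2 * ab i) ∧ (lam - bb i) / (2 * ab i) < 0) ∧
    (∀ i ∈ S, 0 < (lam - bs i) / (2 * as i) ∧ (lam - bs i) / (2 * as i) < Ps i) := by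
  have hk2 : 2 < k := by linarith
  have hY : 0 < ∑ i ∈ S, Ps i := sum_pos hPs hS
  have hD : 0 < ∑ i ∈ B, 1 / ab i + ∑ i ∈ S, 1 / as i :=
    add_pos_of_nonneg_of_pos (sum_nonneg fun i hi => (one_div_pos.2 (hab i hi)).le)
      (sum_pos (fun i hi => one_div_pos.2 (has i hi)) hS)
  rw [← sum_neg_distrib] at hratio1 hratio2
  rw [div_lt_div_iff₀ (mul_pos hkb.1 (by linarith)) hY] at hratio1
  rw [div_lt_div_iff₀ hY two_pos] at hratio2
  replace hlam : lam = clearingPrice B S ab bb as bs := hlam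
  have hsell : ∀ i ∈ S, bs i < lam := fun i hi => hlam ▸
    sellerBid_lt_clearingPrice hlamLU hk2 hD hab hPs (by linarith) hbs (fun j hj => (has2 j hj).1)
      (fun j hj => (hbb j hj).1) (fun j hj => (hab2 j hj).2) hi
  have hbuy : ∀ i ∈ B, lam < bb i := fun i hi => hlam ▸
    clearingPrice_lt_buyerBid hlamLU hk2 hD has hPb (by linarith) (fun j hj => (hbs j hj).2)
      (fun j hj => (has2 j hj).2) hbb (fun j hj => (hab2 j hj).1) hi
  obtain ⟨s, hs⟩ := hS
  obtain ⟨b, hb⟩ := hB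
  refine ⟨fun i hi => ⟨?_, ?_⟩, fun i hi => ⟨?_, ?_⟩⟩
  · exact lt_div_two_mul_of_le (hPb i hi) (hab i hi) (hab2 i hi).1
      (by linarith [hsell s hs, (hbs s hs).1, (hbb i hi).2])
  · exact div_neg_of_neg_of_pos (sub_neg.2 (hbuy i hi)) (by linarith [hab i hi])
  · exact div_pos (sub_pos.2 (hsell i hi)) (by linarith [has i hi])
  · exact div_two_mul_lt_of_le (hPs i hi) (has i hi) (has2 i hi).1
      (by linarith [hbuy b hb, (hbb b hb).2, (hbs i hi).1])

/-- Theorem 2: decentralized, privacy-preserving parameter selection rules based on the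
design parameters `k > 3`, `0 < k_s < 2`, `0 < k_b < 2` satisfying the global ratio
condition guarantee strict feasibility of all P2P energy transactions. -/
theorem thm2_strict_feasibility {ι : Type*} (B S : Finset ι) (hBS : Disjoint B S)
    (hB : B.Nonempty) (hS : S.Nonempty)
    (ab bb Pb as bs Ps : ι → ℝ)
    (hab : ∀ i ∈ B, 0 < ab i) (hPb : ∀ i ∈ B, Pb i < 0)
    (has : ∀ i ∈ S, 0 < as i) (hPs : ∀ i ∈ S, 0 < Ps i)
    (lamL lamU : ℝ) (hlamLU : lamL < lamU)
    (lam : ℝ)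
    (hlam : lam = (∑ i ∈ B, bb i / ab i + ∑ i ∈ S, bs i / as i) /
                  (∑ i ∈ B, 1 / ab i + ∑ i ∈ S, 1 / as i))
    (k ks kb : ℝ) (hk : k > 3) (hks : 0 < ks ∧ ks < 2) (hkb : 0 < kb ∧ kb < 2)
    (hratio1 : 2 / (kb * (k - 2)) < (-∑ i ∈ B, Pb i) / (∑ i ∈ S, Ps i))
    (hratio2 : (-∑ i ∈ B, Pb i) / (∑ i ∈ S, Ps i) < ks * (k - 2) / 2)
    (hbs : ∀ i ∈ S, lamL ≤ bs i ∧ bs i < lamL + (lamU - lamL) / k)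
    (has2 : ∀ i ∈ S, (lamU - lamL) / (2 * Ps i) < as i ∧ as i ≤ (lamU - lamL) / (ks * Ps i))
    (hbb : ∀ i ∈ B, lamL + (k - 1) * (lamU - lamL) / k < bb i ∧ bb i ≤ lamU)
    (hab2 : ∀ i ∈ B, (lamU - lamL) / (-2 * Pb i) < ab i ∧ ab i ≤ (lamU - lamL) / (-kb * Pb i)) :
    (∀ i ∈ B, Pb i < (lam - bb i) / (2 * ab i) ∧ (lam - bb i) / (2 * ab i) < 0) ∧
    (∀ i ∈ S, 0 < (lam - bs i) / (2 * as i) ∧ (lam - bs i) / (2 * as i) < Ps i) :=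
  thm2_strict_feasibility_general B S hB hS ab bb Pb as bs Ps hab hPb has hPs lamL lamU hlamLU lam
    hlam k ks kb hk hkb hratio1 hratio2 hbs has2 hbb hab2
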